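/- ∑_{n=1}^∞ m(n)·(1/3)ⁿ = 1; that is, the asymptotic probabilities m(k)/3ᵏ that a random vertex of a large random Motzkin tree has exactly k vertices in its subtree sum to 1 over all k ≥ 1 (the statistic 'number of vertices in the subtree' is tight for Motzkin trees). -/

import Mathlib

/-! With `a n = m n · xⁿ`, the recurrence reads `a (n + 2) = x · (a (n + 1) + (a ⋆ a) (n + 1))`, so
`S = ∑ a n` formally satisfies `S = x + x S + x S²`. The partial sums obey the same relation as an
inequality, hence stay below any nonnegative `t` with `x + x t + x t² ≤ t`; for `x = 1/3` one may
take `t = 1`. The series therefore converges, the Cauchy product turns the formal relation into a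
true one, and for `x = 1/3` it reads `(S - 1)² = 0`. -/

open Finset

theorem motzkin_succ_succ {m : ℕ → ℕ} (hm0 : m 0 = 0)
    (hm : ∀ n, 2 ≤ n → m n = m (n - 1) + ∑ i ∈ Icc 1 (n - 2), m i * m (n - 1 - i)) (n : ℕ) :
    m (n + 2) = m (n + 1) + ∑ p ∈ antidiagonal (n + 1), m p.1 * m p.2 := by
  rw [hm (n + 2) (by omega), Nat.sum_antidiagonal_eq_sum_range_succ (fun i j => m i * m j),
    sum_range_succ', sum_range_succ, ← Ico_add_one_right_eq_Icc, sum_Ico_eq_sum_range]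
  simp [hm0, add_comm 1]

theorem motzkin_weighted_succ_succ {m : ℕ → ℕ} (hm0 : m 0 = 0)
    (hm : ∀ n, 2 ≤ n → m n = m (n - 1) + ∑ i ∈ Icc 1 (n - 2), m i * m (n - 1 - i)) (x : ℝ)
    (n : ℕ) :
    (m (n + 2) : ℝ) * x ^ (n + 2) = x * ((m (n + 1) : ℝ) * x ^ (n + 1) +
      ∑ p ∈ antidiagonal (n + 1), (m p.1 : ℝ) * x ^ p.1 * ((m p.2 : ℝ) * x ^ p.2)) := by
  rw [motzkin_succ_succ hm0 hm]
  push_cast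
  rw [add_mul, sum_mul, mul_add, mul_sum]
  congr 1
  · ring
  refine sum_congr rfl fun p hp => ?_
  rw [show n + 2 = p.1 + p.2 + 1 by rw [HasAntidiagonal.mem_antidiagonal.mp hp], pow_succ, pow_add]
  ring

theorem sum_range_sum_antidiagonal_le_sq {R : Type*} [CommSemiring R] [PartialOrder R]
    [IsOrderedRing R] {a : ℕ → R} (ha : ∀ n, 0 ≤ a n) (N : ℕ) :
    ∑ k ∈ range N, ∑ p ∈ antidiagonal k, a p.1 * a p.2 ≤ (∑ n ∈ range N, a n) ^ 2 := by
  have hdisj : (range N : Set ℕ).PairwiseDisjoint antidiagonal := fun i _ j _ hij =>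
    disjoint_left.mpr fun p hpi hpj => hij ((HasAntidiagonal.mem_antidiagonal.mp hpi).symm.trans
      (HasAntidiagonal.mem_antidiagonal.mp hpj))
  have hsub : (range N).biUnion antidiagonal ⊆ range N ×ˢ range N := by
    intro p hp
    obtain ⟨k, hk, hpk⟩ := mem_biUnion.mp hp
    rw [mem_range] at hk
    rw [HasAntidiagonal.mem_antidiagonal] at hpk
    rw [mem_product, mem_range, mem_range]
    omega
  rw [← sum_biUnion hdisj, sq, sum_mul_sum, ← sum_product']
  exact sum_le_sum_of_subset_of_nonneg hsub fun p _ _ => mul_nonneg (ha _) (ha _)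

section MotzkinRecurrence

variable {a : ℕ → ℝ} {x : ℝ}

theorem sum_range_succ_le_of_rec (hx : 0 ≤ x) (ha : ∀ n, 0 ≤ a n) (ha0 : a 0 = 0)
    (ha1 : a 1 = x)
    (hrec : ∀ n, a (n + 2) = x * (a (n + 1) + ∑ p ∈ antidiagonal (n + 1), a p.1 * a p.2))
    (N : ℕ) :
    ∑ n ∈ range (N + 1), a n ≤ x + x * ∑ n ∈ range N, a n + x * (∑ n ∈ range N, a n) ^ 2 := by
  rcases N with _ | K
  · simpa [ha0] using hx
  set c : ℕ → ℝ := fun k => ∑ p ∈ antidiagonal k, a p.1 * a p.2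
  have hsplit : ∑ n ∈ range (K + 2), a n =
      x + x * (∑ k ∈ range K, a (k + 1) + ∑ k ∈ range K, c (k + 1)) := by
    rw [sum_range_succ', sum_range_succ', ← sum_add_distrib, mul_sum]
    simp only [hrec, ha0, ha1, c]
    ring
  have hshift : ∑ n ∈ range (K + 1), a n = ∑ k ∈ range K, a (k + 1) := by
    rw [sum_range_succ', ha0, add_zero]
  have hconv : ∑ k ∈ range K, c (k + 1) ≤ (∑ n ∈ range (K + 1), a n) ^ 2 := by
    refine le_trans ?_ (sum_range_sum_antidiagonal_le_sq ha (K + 1))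
    rw [sum_range_succ' c]
    exact le_add_of_nonneg_right (sum_nonneg fun p _ => mul_nonneg (ha _) (ha _))
  rw [hsplit, ← hshift]
  linarith [mul_le_mul_of_nonneg_left hconv hx]

theorem sum_range_le_of_rec (hx : 0 ≤ x) (ha : ∀ n, 0 ≤ a n) (ha0 : a 0 = 0) (ha1 : a 1 = x)
    (hrec : ∀ n, a (n + 2) = x * (a (n + 1) + ∑ p ∈ antidiagonal (n + 1), a p.1 * a p.2))
    {t : ℝ} (ht : x + x * t + x * t ^ 2 ≤ t) (N : ℕ) :
    ∑ n ∈ range N, a n ≤ t := by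
  induction N with
  | zero =>
    rw [sum_range_zero]
    -- `x (1 + t + t²) ≤ t` with `1 + t + t² > 0` forces `0 ≤ t`
    nlinarith [mul_nonneg hx (sq_nonneg (t + 1 / 2))]
  | succ N ih =>
    have hS : 0 ≤ ∑ n ∈ range N, a n := sum_nonneg fun n _ => ha n
    calc ∑ n ∈ range (N + 1), a n
        ≤ x + x * ∑ n ∈ range N, a n + x * (∑ n ∈ range N, a n) ^ 2 :=
          sum_range_succ_le_of_rec hx ha ha0 ha1 hrec N
      _ ≤ x + x * t + x * t ^ 2 := by gcongr
      _ ≤ t := ht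

theorem eq_of_rec_of_hasSum (ha : ∀ n, 0 ≤ a n) (ha0 : a 0 = 0) (ha1 : a 1 = x)
    (hrec : ∀ n, a (n + 2) = x * (a (n + 1) + ∑ p ∈ antidiagonal (n + 1), a p.1 * a p.2))
    {s : ℝ} (hs : HasSum a s) :
    s = x + x * s + x * s ^ 2 := by
  set c : ℕ → ℝ := fun k => ∑ p ∈ antidiagonal k, a p.1 * a p.2
  have hprod : Summable fun p : ℕ × ℕ => a p.1 * a p.2 :=
    hs.summable.mul_of_nonneg hs.summable ha ha
  have hc : HasSum c (s ^ 2) := by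
    rw [sq, ← hs.tsum_eq, hs.summable.tsum_mul_tsum_eq_tsum_sum_antidiagonal hs.summable hprod]
    exact (summable_sum_mul_antidiagonal_of_summable_mul hprod).hasSum
  have hs1 : HasSum (fun n => a (n + 1)) s := by
    simpa [ha0] using (hasSum_nat_add_iff' 1).mpr hs
  have hc1 : HasSum (fun n => c (n + 1)) (s ^ 2) := by
    simpa [c, ha0] using (hasSum_nat_add_iff' 1).mpr hc
  have hs2 : HasSum (fun n => a (n + 2)) (s - x) := by
    simpa [sum_range_succ, ha0, ha1] using (hasSum_nat_add_iff' 2).mpr hs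
  have := hs2.unique (by simpa only [hrec] using (hs1.add hc1).mul_left x)
  linarith

end MotzkinRecurrence

/-- With `m` the Motzkin tree counting sequence,
`∑_{n≥1} m(n)·(1/3)ⁿ = 1`: the asymptotic probabilities `m(k)/3ᵏ` that a random vertex
of a large random Motzkin tree has exactly `k` vertices in its subtree sum to 1, so the
statistic is tight. Since `m 0 = 0`, summing over all `n : ℕ` is the same as summing
over `n ≥ 1`. -/
theorem motzkin_subtree_statistic_tight
    (m : ℕ → ℕ) (hm0 : m 0 = 0) (hm1 : m 1 = 1)
    (hm : ∀ n, 2 ≤ n →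
      m n = m (n - 1) + ∑ i ∈ Finset.Icc 1 (n - 2), m i * m (n - 1 - i)) :
    HasSum (fun n : ℕ => (m n : ℝ) * (1 / 3) ^ n) 1 := by
  set a : ℕ → ℝ := fun n => (m n : ℝ) * (1 / 3) ^ n
  have ha : ∀ n, 0 ≤ a n := fun n => by positivity
  have ha0 : a 0 = 0 := by simp [a, hm0]
  have ha1 : a 1 = 1 / 3 := by simp [a, hm1]
  have hrec := motzkin_weighted_succ_succ hm0 hm (1 / 3)
  have hsum : Summable a := summable_of_sum_range_le ha
    (sum_range_le_of_rec (by norm_num) ha ha0 ha1 hrec (t := 1) (by norm_num))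
  have hs := eq_of_rec_of_hasSum ha ha0 ha1 hrec hsum.hasSum
  have hs1 : ∑' n, a n = 1 := by nlinarith [sq_nonneg (∑' n, a n - 1)]
  exact hs1 ▸ hsum.hasSum
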